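/- arXiv:1507.00918 — 2 statements merged into one kernel-verified Lean document; each statement's English description precedes it below -/
import Mathlib

section
/- Let L be the generator of the two-dimensional diffusion (Z,V) given by dZ = -βZ(1-Z)dt - σ√(VZ)dB⁰ - σ√(Z(1-Z-V))dB¹ and dV = βVZ dt + σ√(VZ)dB⁰ + σ√(V(1-V-Z))dB², with B⁰,B¹,B² independent. Then the generator applied to Y_n(z,v) = ∑_{m=1}^{n} z^{m-1}v equals nβ(Y_{n+1} - Y_n) + (σ²n(n-1)/2)(Y_{n-1} - Y_n). -/
lemma pow_shift1 (z : ℝ) (m : ℕ) :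
    (m : ℝ) * (z * z ^ (m - 1)) = m * z ^ m := by
  cases m with
  | zero => simp
  | succ k => rw [Nat.add_sub_cancel, pow_succ]; push_cast; ring

lemma pow_shift2 (z : ℝ) (m : ℕ) :
    (m : ℝ) * ((m : ℝ) - 1) * (z * z ^ (m - 2)) = m * ((m : ℝ) - 1) * z ^ (m - 1) := by
  match m with
  | 0 => simp
  | 1 => norm_num
  | (k + 2) =>
    have h1 : k + 2 - 2 = k := by omega
    have h2 : k + 2 - 1 = k + 1 := by omega
    rw [h1, h2, pow_succ]; ring

lemma sumA (z : ℝ) (n : ℕ) :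
    (1 - z) * ∑ k ∈ Finset.range n, (k : ℝ) * z ^ (k - 1)
      = (∑ k ∈ Finset.range n, z ^ k) - (n : ℝ) * z ^ (n - 1) := by
  induction n with
  | zero => simp
  | succ m ih =>
    rw [Finset.sum_range_succ, Finset.sum_range_succ, Nat.add_sub_cancel]
    have h := pow_shift1 z m
    push_cast
    linear_combination ih - h

lemma sumB (z : ℝ) (n : ℕ) :
    (1 - z) * ∑ k ∈ Finset.range n, (k : ℝ) * ((k : ℝ) - 1) * z ^ (k - 2)
      = 2 * (∑ k ∈ Finset.range n, (k : ℝ) * z ^ (k - 1))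
        - (n : ℝ) * ((n : ℝ) - 1) * z ^ (n - 2) := by
  induction n with
  | zero => simp
  | succ m ih =>
    rw [Finset.sum_range_succ, Finset.sum_range_succ]
    have h2 : m + 1 - 2 = m - 1 := by omega
    rw [h2]
    have h := pow_shift2 z m
    push_cast
    linear_combination ih - h

/-- Generator of the coupled (Z,V) diffusion applied to
Y_n(z,v) = ∑_{m=1}^n z^{m-1} v = v ∑_{k=0}^{n-1} z^k equals
nβ(Y_{n+1}-Y_n) + (σ²n(n-1)/2)(Y_{n-1}-Y_n).  The generator is
L f = -βz(1-z)∂_z f + βvz ∂_v f + (σ²/2)z(1-z)∂²_z f + (σ²/2)v(1-v)∂²_v f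
      - σ²vz ∂_z∂_v f, and the partial derivatives of Y_n are written out
explicitly (∂²_v Y_n = 0). -/
theorem generator_on_Yn (β σ z v : ℝ) (hβ : 0 ≤ β) (hσ : 0 ≤ σ)
    (hz : 0 ≤ z) (hv : 0 ≤ v) (hzv : z + v ≤ 1)
    (n : ℕ) (hn : 1 ≤ n) (Y : ℕ → ℝ)
    (hY : ∀ m, Y m = v * ∑ k ∈ Finset.range m, z ^ k) :
    -β * z * (1 - z) * (v * ∑ k ∈ Finset.range n, (k : ℝ) * z ^ (k - 1))
        + β * v * z * (∑ k ∈ Finset.range n, z ^ k)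
        + σ ^ 2 / 2 * (z * (1 - z))
            * (v * ∑ k ∈ Finset.range n, (k : ℝ) * ((k : ℝ) - 1) * z ^ (k - 2))
        + σ ^ 2 / 2 * (v * (1 - v)) * 0
        - σ ^ 2 * v * z * (∑ k ∈ Finset.range n, (k : ℝ) * z ^ (k - 1))
      = (n : ℝ) * β * (Y (n + 1) - Y n)
        + σ ^ 2 * n * ((n : ℝ) - 1) / 2 * (Y (n - 1) - Y n) := by
  obtain ⟨m, rfl⟩ : ∃ m, n = m + 1 := ⟨n - 1, (Nat.succ_pred_eq_of_pos hn).symm⟩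
  simp only [hY, Nat.add_sub_cancel]
  have hA := sumA z (m + 1)
  have hB := sumB z (m + 1)
  rw [Nat.add_sub_cancel] at hA
  have h2 : m + 1 - 2 = m - 1 := by omega
  rw [h2] at hB
  have h1 := pow_shift1 z m
  have hs : ∑ k ∈ Finset.range (m + 1 + 1), z ^ k
      = (∑ k ∈ Finset.range (m + 1), z ^ k) + z ^ (m + 1) := Finset.sum_range_succ _ _
  have hss : ∑ k ∈ Finset.range (m + 1), z ^ k
      = (∑ k ∈ Finset.range m, z ^ k) + z ^ m := Finset.sum_range_succ _ _
  have hp : z ^ (m + 1) = z ^ m * z := pow_succ z m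
  push_cast at hA hB ⊢
  linear_combination (-β * z * v) * hA + (σ ^ 2 / 2 * z * v) * hB
    - σ ^ 2 / 2 * v * ((m : ℝ) + 1) * h1
    - ((m : ℝ) + 1) * β * v * hs + σ ^ 2 * ((m : ℝ) + 1) * (m : ℝ) / 2 * v * hss
    - ((m : ℝ) + 1) * β * v * hp
end

section
/- Let p_t(k) be the transition probability of the rate-2 continuous-time simple symmetric random walk on ℤ. There exists C > 0 such that for all θ ≥ 0, 0 ≤ ∫₀^∞ (p_s(0) - p_{s+θ}(0)) ds ≤ C√θ. -/
/-!
The local limit bound `p_s(0) ≤ s^(-1/2)` does all the work. It comes from the discrete bound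
`(P(S_n = 0))² ≤ 1/(n+1)` averaged over the Poisson(2s) number of jumps, using
`(E X)² ≤ E X²` and `E[1/(N+1)] = (1 - e^{-2s})/(2s)` for `N ~ Poisson(2s)`. Shifting the
variable, `∫₀^T (p_s(0) - p_{s+θ}(0)) ds = ∫₀^θ p_s(0) ds - ∫_T^{T+θ} p_s(0) ds`;
the second term is at most `θ T^(-1/2) → 0`, and the first lies between `0` and
`∫₀^θ s^(-1/2) ds = 2√θ`.
-/

/-- m-step transition probability of the discrete-time simple symmetric
random walk on ℤ started at 0. -/
noncomputable def discreteWalk (n : ℕ) (k : ℤ) : ℝ :=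
  if (k + n) % 2 = 0 ∧ k.natAbs ≤ n then
    ((n.choose ((k + n) / 2).toNat : ℕ) : ℝ) / 2 ^ n
  else 0

/-- Transition probability p_t(k) of the rate-2 continuous-time simple
symmetric random walk on ℤ: the number of jumps is Poisson(2t) and each jump
is ±1 with probability 1/2. -/
noncomputable def ctWalk (t : ℝ) (k : ℤ) : ℝ :=
  ∑' n : ℕ, Real.exp (-(2 * t)) * (2 * t) ^ n / (n.factorial : ℝ) * discreteWalk n k

open Real Filter Topology MeasureTheory intervalIntegral

theorem sq_tsum_mul_le_tsum_mul_sq {ι : Type*} {w f : ι → ℝ} (hw : ∀ i, 0 ≤ w i)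
    (hw1 : HasSum w 1) (hwf : Summable fun i => w i * f i)
    (hwf2 : Summable fun i => w i * f i ^ 2) :
    (∑' i, w i * f i) ^ 2 ≤ ∑' i, w i * f i ^ 2 := by
  obtain ⟨S, hS⟩ := hwf
  have hvar := (hwf2.hasSum.sub (hS.mul_left (2 * S))).add (hw1.mul_left (S ^ 2))
  have hnonneg := hvar.nonneg fun i => by nlinarith [mul_nonneg (hw i) (sq_nonneg (f i - S))]
  rw [hS.tsum_eq]
  linarith

theorem Nat.two_mul_add_one_mul_centralBinom_sq_le (m : ℕ) :
    (2 * m + 1) * m.centralBinom ^ 2 ≤ 16 ^ m := by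
  induction m with
  | zero => simp
  | succ m ih =>
    have hrec := Nat.succ_mul_centralBinom_succ m
    have hsq : (m + 1) ^ 2 * ((2 * m + 3) * (m + 1).centralBinom ^ 2)
        = 4 * ((2 * m + 3) * (2 * m + 1)) * ((2 * m + 1) * m.centralBinom ^ 2) := by
      linear_combination (2 * m + 3) * congrArg (· ^ 2) hrec
    refine Nat.le_of_mul_le_mul_left ?_ (by positivity : 0 < (m + 1) ^ 2)
    calc (m + 1) ^ 2 * ((2 * (m + 1) + 1) * (m + 1).centralBinom ^ 2)
        = 4 * ((2 * m + 3) * (2 * m + 1)) * ((2 * m + 1) * m.centralBinom ^ 2) := hsq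
      _ ≤ 4 * (4 * (m + 1) ^ 2) * 16 ^ m :=
          Nat.mul_le_mul (Nat.mul_le_mul_left 4 (by nlinarith)) ih
      _ = (m + 1) ^ 2 * 16 ^ (m + 1) := by ring

theorem discreteWalk_nonneg (n : ℕ) (k : ℤ) : 0 ≤ discreteWalk n k := by
  unfold discreteWalk; split <;> positivity

theorem discreteWalk_le_one (n : ℕ) (k : ℤ) : discreteWalk n k ≤ 1 := by
  unfold discreteWalk
  split
  · rw [div_le_one (by positivity)]
    exact_mod_cast Nat.choose_le_two_pow n _
  · exact zero_le_one

theorem discreteWalk_zero_sq_le (n : ℕ) : discreteWalk n 0 ^ 2 ≤ 1 / (n + 1) := by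
  obtain ⟨m, rfl | rfl⟩ := Nat.even_or_odd' n
  · have hm : discreteWalk (2 * m) 0 = m.centralBinom / 4 ^ m := by
      rw [discreteWalk, if_pos ⟨by omega, by simp⟩, Nat.centralBinom_eq_two_mul_choose, pow_mul]
      norm_num
    have hc : ((2 * m + 1) * m.centralBinom ^ 2 : ℝ) ≤ 16 ^ m := by
      exact_mod_cast Nat.two_mul_add_one_mul_centralBinom_sq_le m
    rw [hm, div_pow, ← pow_mul, div_le_div_iff₀ (by positivity) (by positivity)]
    push_cast
    rw [show (4 : ℝ) ^ (m * 2) = 16 ^ m by rw [pow_mul']; norm_num]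
    linarith
  · rw [discreteWalk, if_neg (by omega), zero_pow two_ne_zero]
    positivity

noncomputable def poissonWeight (r : ℝ) (n : ℕ) : ℝ := exp (-r) * r ^ n / n.factorial

theorem poissonWeight_nonneg {r : ℝ} (hr : 0 ≤ r) (n : ℕ) : 0 ≤ poissonWeight r n := by
  unfold poissonWeight; positivity

theorem hasSum_poissonWeight (r : ℝ) : HasSum (poissonWeight r) 1 := by
  have := (NormedSpace.expSeries_div_hasSum_exp r).mul_left (exp (-r))
  rw [← exp_eq_exp_ℝ, ← exp_add, neg_add_cancel, exp_zero] at this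
  unfold poissonWeight
  simpa only [mul_div_assoc] using this

theorem poissonWeight_succ (r : ℝ) (n : ℕ) :
    poissonWeight r (n + 1) = r / (n + 1) * poissonWeight r n := by
  unfold poissonWeight
  rw [Nat.factorial_succ]
  push_cast
  field_simp
  ring

theorem hasSum_poissonWeight_div_succ {r : ℝ} (hr : r ≠ 0) :
    HasSum (fun n => poissonWeight r n / (n + 1)) ((1 - exp (-r)) / r) := by
  have hshift := (hasSum_nat_add_iff' 1).mpr (hasSum_poissonWeight r)
  have hterm : (fun n : ℕ => poissonWeight r n / (n + 1))
      = fun n => poissonWeight r (n + 1) / r := by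
    ext n
    rw [poissonWeight_succ]
    field_simp
  rw [hterm, show 1 - exp (-r) = 1 - ∑ i ∈ Finset.range 1, poissonWeight r i by
    simp [poissonWeight]]
  exact hshift.div_const r

theorem summable_poissonWeight_mul {r : ℝ} (hr : 0 ≤ r) {f : ℕ → ℝ} (hf0 : ∀ n, 0 ≤ f n)
    (hf1 : ∀ n, f n ≤ 1) : Summable fun n => poissonWeight r n * f n :=
  (hasSum_poissonWeight r).summable.of_nonneg_of_le
    (fun n => mul_nonneg (poissonWeight_nonneg hr n) (hf0 n))
    (fun n => mul_le_of_le_one_right (poissonWeight_nonneg hr n) (hf1 n))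

theorem ctWalk_eq_tsum (t : ℝ) (k : ℤ) :
    ctWalk t k = ∑' n, poissonWeight (2 * t) n * discreteWalk n k := rfl

theorem ctWalk_nonneg {t : ℝ} (ht : 0 ≤ t) (k : ℤ) : 0 ≤ ctWalk t k :=
  tsum_nonneg fun n =>
    mul_nonneg (poissonWeight_nonneg (by positivity) n) (discreteWalk_nonneg n k)

theorem ctWalk_le_one {t : ℝ} (ht : 0 ≤ t) (k : ℤ) : ctWalk t k ≤ 1 := by
  have h2t : 0 ≤ 2 * t := by positivity
  rw [ctWalk_eq_tsum, ← (hasSum_poissonWeight (2 * t)).tsum_eq]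
  refine Summable.tsum_le_tsum (fun n => ?_)
    (summable_poissonWeight_mul h2t (discreteWalk_nonneg · k) (discreteWalk_le_one · k))
    (hasSum_poissonWeight _).summable
  exact mul_le_of_le_one_right (poissonWeight_nonneg h2t n) (discreteWalk_le_one n k)

theorem ctWalk_zero_sq_le {t : ℝ} (ht : 0 < t) : ctWalk t 0 ^ 2 ≤ 1 / (2 * t) := by
  have h2t : 0 ≤ 2 * t := by positivity
  have hmean := hasSum_poissonWeight_div_succ (r := 2 * t) (by positivity)
  have hsummable_sq := summable_poissonWeight_mul h2t (fun n => sq_nonneg (discreteWalk n 0))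
    (fun n => pow_le_one₀ (discreteWalk_nonneg n 0) (discreteWalk_le_one n 0))
  calc ctWalk t 0 ^ 2 ≤ ∑' n, poissonWeight (2 * t) n * discreteWalk n 0 ^ 2 :=
        sq_tsum_mul_le_tsum_mul_sq (poissonWeight_nonneg h2t) (hasSum_poissonWeight _)
          (summable_poissonWeight_mul h2t (discreteWalk_nonneg · 0) (discreteWalk_le_one · 0))
          hsummable_sq
    _ ≤ ∑' n : ℕ, poissonWeight (2 * t) n / (n + 1) := by
        refine hsummable_sq.tsum_le_tsum (fun n => ?_) hmean.summable
        rw [div_eq_mul_one_div]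
        exact mul_le_mul_of_nonneg_left (discreteWalk_zero_sq_le n) (poissonWeight_nonneg h2t n)
    _ = (1 - exp (-(2 * t))) / (2 * t) := hmean.tsum_eq
    _ ≤ 1 / (2 * t) := by gcongr; linarith [exp_pos (-(2 * t))]

theorem ctWalk_zero_le_rpow {t : ℝ} (ht : 0 < t) : ctWalk t 0 ≤ t ^ (-(1 / 2) : ℝ) := by
  rw [rpow_neg ht.le, ← sqrt_eq_rpow, ← sqrt_inv]
  refine le_sqrt_of_sq_le ((ctWalk_zero_sq_le ht).trans ?_)
  rw [inv_eq_one_div]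
  gcongr
  linarith

theorem measurable_ctWalk (k : ℤ) : Measurable fun t => ctWalk t k :=
  Measurable.tsum fun n => by fun_prop

theorem intervalIntegrable_ctWalk (k : ℤ) {a b : ℝ} (ha : 0 ≤ a) (hb : 0 ≤ b) :
    IntervalIntegrable (fun t => ctWalk t k) volume a b := by
  refine (intervalIntegrable_const (c := (1 : ℝ))).mono_fun'
    (measurable_ctWalk k).aestronglyMeasurable (ae_restrict_of_forall_mem measurableSet_uIoc ?_)
  intro t ht
  have ht0 : 0 ≤ t := (le_min ha hb).trans ht.1.le
  show ‖ctWalk t k‖ ≤ 1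
  rw [norm_of_nonneg (ctWalk_nonneg ht0 k)]
  exact ctWalk_le_one ht0 k

section Shift

variable {f : ℝ → ℝ} {θ : ℝ}

theorem integral_sub_comp_add_eq (hf : ∀ a b, 0 ≤ a → 0 ≤ b → IntervalIntegrable f volume a b)
    (hθ : 0 ≤ θ) {T : ℝ} (hT : 0 ≤ T) :
    ∫ s in (0 : ℝ)..T, (f s - f (s + θ)) = (∫ s in (0 : ℝ)..θ, f s) - ∫ s in T..T + θ, f s := by
  have hTθ : 0 ≤ T + θ := add_nonneg hT hθ
  have hshift : IntervalIntegrable (fun s => f (s + θ)) volume 0 T := by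
    simpa using (hf θ (T + θ) hθ hTθ).comp_add_right θ
  rw [integral_sub (hf 0 T le_rfl hT) hshift, integral_comp_add_right f θ, zero_add,
    integral_interval_sub_interval_comm (hf 0 T le_rfl hT) (hf θ (T + θ) hθ hTθ)
      (hf 0 θ le_rfl hθ)]

theorem integral_Ioi_sub_comp_add_eq
    (hf : ∀ a b, 0 ≤ a → 0 ≤ b → IntervalIntegrable f volume a b) (hθ : 0 ≤ θ)
    (htail : Tendsto (fun T => ∫ s in T..T + θ, f s) atTop (𝓝 0))
    (hint : IntegrableOn (fun s => f s - f (s + θ)) (Set.Ioi 0)) :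
    ∫ s in Set.Ioi 0, (f s - f (s + θ)) = ∫ s in (0 : ℝ)..θ, f s := by
  refine tendsto_nhds_unique (intervalIntegral_tendsto_integral_Ioi 0 hint tendsto_id) ?_
  have hlim := (tendsto_const_nhds (x := ∫ s in (0 : ℝ)..θ, f s)).sub htail
  rw [sub_zero] at hlim
  refine hlim.congr' ?_
  filter_upwards [eventually_ge_atTop 0] with T hT
  exact (integral_sub_comp_add_eq hf hθ hT).symm

end Shift

theorem integral_ctWalk_zero_le_two_mul_sqrt {θ : ℝ} (hθ : 0 ≤ θ) :
    ∫ s in (0 : ℝ)..θ, ctWalk s 0 ≤ 2 * √θ := by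
  calc ∫ s in (0 : ℝ)..θ, ctWalk s 0 ≤ ∫ s in (0 : ℝ)..θ, s ^ (-(1 / 2) : ℝ) :=
        integral_mono_on_of_le_Ioo hθ (intervalIntegrable_ctWalk 0 le_rfl hθ)
          (intervalIntegrable_rpow' (by norm_num)) fun s hs => ctWalk_zero_le_rpow hs.1
    _ = 2 * √θ := by
        rw [integral_rpow (by norm_num), sqrt_eq_rpow, zero_rpow (by norm_num)]
        norm_num
        ring

theorem tendsto_integral_ctWalk_zero_self_add {θ : ℝ} (hθ : 0 ≤ θ) :
    Tendsto (fun T => ∫ s in T..T + θ, ctWalk s 0) atTop (𝓝 0) := by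
  have hbound : ∀ T, 0 < T →
      ∫ s in T..T + θ, ctWalk s 0 ≤ ∫ s in T..T + θ, T ^ (-(1 / 2) : ℝ) := fun T hT =>
    integral_mono_on (by linarith) (intervalIntegrable_ctWalk 0 hT.le (by linarith))
      intervalIntegrable_const fun s hs => (ctWalk_zero_le_rpow (hT.trans_le hs.1)).trans
        (rpow_le_rpow_of_nonpos hT hs.1 (by norm_num))
  have hdecay := (tendsto_rpow_neg_atTop (y := 1 / 2) (by norm_num)).const_mul θ
  rw [mul_zero] at hdecay
  refine squeeze_zero' ?_ ?_ hdecay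
  · filter_upwards [eventually_ge_atTop 0] with T hT
    exact integral_nonneg (by linarith) fun s hs => ctWalk_nonneg (hT.trans hs.1) 0
  · filter_upwards [eventually_gt_atTop 0] with T hT
    simpa using hbound T hT

/-- Estimate (47): 0 ≤ ∫₀^∞ (p_s(0) - p_{s+θ}(0)) ds ≤ C√θ. -/
theorem time_increment_bound :
    ∃ C : ℝ, 0 < C ∧ ∀ θ : ℝ, 0 ≤ θ →
      0 ≤ ∫ s in Set.Ioi (0:ℝ), (ctWalk s 0 - ctWalk (s + θ) 0) ∧
      ∫ s in Set.Ioi (0:ℝ), (ctWalk s 0 - ctWalk (s + θ) 0) ≤ C * Real.sqrt θ := by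
  refine ⟨2, two_pos, fun θ hθ => ?_⟩
  by_cases hint : IntegrableOn (fun s => ctWalk s 0 - ctWalk (s + θ) 0) (Set.Ioi 0)
  · rw [integral_Ioi_sub_comp_add_eq (fun a b => intervalIntegrable_ctWalk 0) hθ
      (tendsto_integral_ctWalk_zero_self_add hθ) hint]
    exact ⟨integral_nonneg hθ fun s hs => ctWalk_nonneg hs.1 0,
      integral_ctWalk_zero_le_two_mul_sqrt hθ⟩
  · rw [integral_undef hint]
    exact ⟨le_rfl, by positivity⟩
end
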